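/- Let p ≥ 3 be a prime with p ∉ {3, 5}. Then p does not divide the number of points of the reduction of E₂ modulo p, i.e. p ∤ #E₂(𝔽_p); equivalently, a_p(E₂) ≢ 1 mod p. -/

import Mathlib

/-- The reduction modulo `p` of the elliptic curve
`E₂ : y² + xy + y = x³ + x² − 5x + 2` (Cremona label 15A3), i.e. the Weierstrass
curve over `𝔽_p = ZMod p` with coefficients `a₁ = 1`, `a₂ = 1`, `a₃ = 1`, `a₄ = −5`,
`a₆ = 2`. -/
def E₂mod (p : ℕ) : WeierstrassCurve.Affine (ZMod p) :=
  { a₁ := 1, a₂ := 1, a₃ := 1, a₄ := -5, a₆ := 2 }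

/-! The 2-torsion points `(1, -1)` and `(-3, 1)` of `E₂` stay nonsingular and distinct modulo
every prime `p ∤ 30` (the `x`-derivative of the Weierstrass equation at `(-3, 1)` is `-15`), so
they generate a Klein four-subgroup of `E₂(𝔽_p)` and `4 ∣ #E₂(𝔽_p)`. On the other hand each
`x ∈ 𝔽_p` carries at most two points, so `0 < #E₂(𝔽_p) ≤ 2p + 1 < 4p`, while `p ∣ #E₂(𝔽_p)` would
force `4p ∣ #E₂(𝔽_p)` since `p` is odd. -/

open Polynomial

namespace WeierstrassCurve.Affine

variable {R : Type*} [CommRing R] (W : WeierstrassCurve.Affine R)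

def pointEquivOption : W.Point ≃ Option {xy : R × R // W.Nonsingular xy.1 xy.2} where
  toFun
    | .zero => none
    | .some x y h => some ⟨(x, y), h⟩
  invFun
    | none => .zero
    | some xy => .some _ _ xy.2
  left_inv := by rintro (_ | _) <;> rfl
  right_inv := by rintro (_ | ⟨⟨_, _⟩, _⟩) <;> rfl

instance [Finite R] : Finite W.Point := .of_equiv _ W.pointEquivOption.symm

variable {F : Type*} [Field F] (W : WeierstrassCurve.Affine F)

lemma card_fiber_equation_le [Fintype F] (x : F) : Nat.card {y // W.Equation x y} ≤ 2 := by
  classical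
  have hq : (W.polynomial.map (evalRingHom x)).Monic := monic_polynomial.map _
  calc Nat.card {y // W.Equation x y}
      ≤ (W.polynomial.map (evalRingHom x)).roots.toFinset.card := by
        rw [Nat.card_eq_fintype_card, Fintype.card_subtype]
        refine Finset.card_le_card fun y hy => ?_
        rw [Multiset.mem_toFinset, mem_roots hq.ne_zero, IsRoot, map_evalRingHom_eval]
        exact (Finset.mem_filter.1 hy).2
    _ ≤ (W.polynomial.map (evalRingHom x)).natDegree :=
        (Multiset.toFinset_card_le _).trans (card_roots' _)
    _ = 2 := by rw [monic_polynomial.natDegree_map, natDegree_polynomial]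

lemma card_equation_le [Fintype F] :
    Nat.card {xy : F × F // W.Equation xy.1 xy.2} ≤ 2 * Nat.card F := by
  calc Nat.card {xy : F × F // W.Equation xy.1 xy.2}
      = ∑ x, Nat.card {y // W.Equation x y} := by
        rw [Nat.card_congr (Equiv.subtypeProdEquivSigmaSubtype W.Equation), Nat.card_sigma]
    _ ≤ ∑ _x : F, 2 := Finset.sum_le_sum fun x _ => W.card_fiber_equation_le x
    _ = 2 * Nat.card F := by simp [mul_comm]

lemma card_point_le [Finite F] : Nat.card W.Point ≤ 2 * Nat.card F + 1 := by
  have := Fintype.ofFinite F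
  rw [Nat.card_congr W.pointEquivOption, Finite.card_option, add_le_add_iff_right]
  calc Nat.card {xy : F × F // W.Nonsingular xy.1 xy.2}
      ≤ Nat.card {xy : F × F // W.Equation xy.1 xy.2} :=
        Nat.card_le_card_of_injective _ (Subtype.impEmbedding _ _ fun _ h => h.1).injective
    _ ≤ 2 * Nat.card F := W.card_equation_le

end WeierstrassCurve.Affine

lemma four_dvd_card_of_two_torsion {G : Type*} [AddCommGroup G] {a b : G} (ha : 2 • a = 0)
    (hb : 2 • b = 0) (ha0 : a ≠ 0) (hb0 : b ≠ 0) (hab : a ≠ b) : 4 ∣ Nat.card G := by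
  have h2 (c : G) (hc : 2 • c = 0) : zmultiplesHom G c 2 = 0 := by
    rwa [zmultiplesHom_apply, two_zsmul, ← two_nsmul]
  let ψ (c : G) (hc : 2 • c = 0) : ZMod 2 →+ G := ZMod.lift 2 ⟨_, h2 c hc⟩
  have ψ_one (c : G) (hc : 2 • c = 0) : ψ c hc 1 = c := by
    simpa using ZMod.lift_coe 2 ⟨_, h2 c hc⟩ 1
  have hab0 : a + b ≠ 0 := by
    rw [two_nsmul, add_eq_zero_iff_eq_neg] at hb
    rwa [Ne, add_eq_zero_iff_eq_neg, ← hb]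
  have zmod_two : ∀ x : ZMod 2, x = 0 ∨ x = 1 := by decide
  have hf : Function.Injective ((ψ a ha).coprod (ψ b hb)) := by
    refine (injective_iff_map_eq_zero _).2 fun ⟨x, y⟩ h => ?_
    rcases zmod_two x with rfl | rfl <;> rcases zmod_two y with rfl | rfl <;>
      simp only [AddMonoidHom.coprod_apply, map_zero, ψ_one, zero_add, add_zero] at h
    exacts [rfl, (hb0 h).elim, (ha0 h).elim, (hab0 h).elim]
  simpa using AddSubgroup.card_dvd_of_injective _ hf

lemma Int.add_one_sub_modEq_one_iff {p n : ℤ} : p + 1 - n ≡ 1 [ZMOD p] ↔ p ∣ n := by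
  rw [Int.modEq_iff_dvd, show 1 - (p + 1 - n) = n - p by ring, dvd_sub_self_right]

lemma Nat.Prime.not_dvd_of_four_dvd {p n : ℕ} (hp : p.Prime) (hp2 : p ≠ 2) (h4 : 4 ∣ n)
    (hn : 0 < n) (hlt : n < 4 * p) : ¬ p ∣ n := by
  intro hpn
  have hcop : Nat.Coprime 4 p :=
    Nat.Coprime.pow_left 2 ((Nat.coprime_primes Nat.prime_two hp).2 hp2.symm)
  exact absurd (Nat.le_of_dvd hn (hcop.mul_dvd_of_dvd_of_dvd h4 hpn)) (by omega)

open WeierstrassCurve.Affine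

section E₂

variable {p : ℕ}

lemma E₂mod_nonsingular_one_neg_one [Fact (1 < p)] : (E₂mod p).Nonsingular 1 (-1) := by
  rw [nonsingular_iff, equation_iff]
  refine ⟨by simp only [E₂mod]; ring, Or.inl ?_⟩
  simp only [E₂mod]
  intro h
  exact one_ne_zero (by linear_combination -h)

lemma E₂mod_nonsingular_neg_three_one (h15 : (15 : ZMod p) ≠ 0) :
    (E₂mod p).Nonsingular (-3) 1 := by
  rw [nonsingular_iff, equation_iff]
  refine ⟨by simp only [E₂mod]; ring, Or.inl ?_⟩
  simp only [E₂mod]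
  intro h
  exact h15 (by linear_combination -h)

lemma four_dvd_card_E₂mod [Fact p.Prime] (hp2 : p ≠ 2) (hp3 : p ≠ 3) (hp5 : p ≠ 5) :
    4 ∣ Nat.card (E₂mod p).Point := by
  have : Fact (Nat.Prime 5) := ⟨Nat.prime_five⟩
  have h2 : (2 : ZMod p) ≠ 0 := by exact_mod_cast ZMod.prime_ne_zero p 2 hp2
  have h15 : (15 : ZMod p) ≠ 0 := by
    rw [show (15 : ZMod p) = (3 : ℕ) * (5 : ℕ) by norm_num]
    exact mul_ne_zero (ZMod.prime_ne_zero p 3 hp3) (ZMod.prime_ne_zero p 5 hp5)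
  have hT₁ := E₂mod_nonsingular_one_neg_one (p := p)
  have hT₂ := E₂mod_nonsingular_neg_three_one h15
  refine four_dvd_card_of_two_torsion (a := .some _ _ hT₁) (b := .some _ _ hT₂) ?_ ?_
    (Point.some_ne_zero _) (Point.some_ne_zero _) ?_
  · rw [two_nsmul]; exact Point.add_self_of_Y_eq (by simp only [negY, E₂mod]; ring)
  · rw [two_nsmul]; exact Point.add_self_of_Y_eq (by simp only [negY, E₂mod]; ring)
  · rw [Ne, Point.some.injEq, not_and]
    intro h
    exact absurd (by linear_combination h : (2 : ZMod p) * 2 = 0) (mul_ne_zero h2 h2)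

end E₂

/-- For any prime `p ≥ 3` with `p ∉ {3, 5}`, `p` does not divide the number of points
of the reduction of `E₂` modulo `p`; equivalently `a_p(E₂) = p + 1 − #E₂(𝔽_p)` is not
congruent to `1` modulo `p`. -/
theorem p_not_dvd_card_E₂_mod_p (p : ℕ) (hp : p.Prime) (hp3' : 3 ≤ p) (hp3 : p ≠ 3)
    (hp5 : p ≠ 5) :
    ¬ p ∣ Nat.card (E₂mod p).Point ∧
      ¬ ((p : ℤ) + 1 - Nat.card (E₂mod p).Point ≡ 1 [ZMOD p]) := by
  have : Fact p.Prime := ⟨hp⟩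
  have hp2 : p ≠ 2 := by omega
  have hle := (E₂mod p).card_point_le
  rw [Nat.card_zmod] at hle
  have hndvd : ¬ p ∣ Nat.card (E₂mod p).Point :=
    hp.not_dvd_of_four_dvd hp2 (four_dvd_card_E₂mod hp2 hp3 hp5) Nat.card_pos (by omega)
  exact ⟨hndvd, by rwa [Int.add_one_sub_modEq_one_iff, Int.natCast_dvd_natCast]⟩
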